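/- If μ and μ' are stable matchings for a stable matching instance with strict preferences, then the function μ∧μ' that assigns to each man his less preferred partner among μ(m) and μ'(m) is a well-defined matching, and it is stable. -/

import Mathlib

open List

/-- A stable-matching instance: each agent has a strict preference order
(a duplicate-free list, earlier = more preferred) over a subset of the other side. -/
structure SMInstance (M W : Type*) where
  mpref : M → List W
  wpref : W → List M
  mnodup : ∀ m, (mpref m).Nodup
  wnodup : ∀ w, (wpref w).Nodup

/-- A matching: a pairing of men and women (agents may be unmatched),
involutive on matched pairs. -/
structure Matching (M W : Type*) where
  μm : M → Option W
  μw : W → Option M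
  consistent : ∀ m w, μm m = some w ↔ μw w = some m

section Defs

variable {M W : Type*} [DecidableEq M] [DecidableEq W]

/-- Man `m` strictly prefers woman `w` to the (possibly empty) assignment `o`. -/
def SMInstance.mPref (I : SMInstance M W) (m : M) (w : W) : Option W → Prop
  | some w' => w ∈ I.mpref m ∧ (w' ∉ I.mpref m ∨ (I.mpref m).idxOf w < (I.mpref m).idxOf w')
  | none => w ∈ I.mpref m

/-- Woman `w` strictly prefers man `m` to the (possibly empty) assignment `o`. -/
def SMInstance.wPref (I : SMInstance M W) (w : W) (m : M) : Option M → Prop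
  | some m' => m ∈ I.wpref w ∧ (m' ∉ I.wpref w ∨ (I.wpref w).idxOf m < (I.wpref w).idxOf m')
  | none => m ∈ I.wpref w

/-- Man `m` weakly prefers assignment `o₁` to assignment `o₂`. -/
def SMInstance.mWeak (I : SMInstance M W) (m : M) (o₁ o₂ : Option W) : Prop :=
  o₁ = o₂ ∨ ∃ w, o₁ = some w ∧ I.mPref m w o₂

/-- Woman `w` weakly prefers assignment `o₁` to assignment `o₂`. -/
def SMInstance.wWeak (I : SMInstance M W) (w : W) (o₁ o₂ : Option M) : Prop :=
  o₁ = o₂ ∨ ∃ m, o₁ = some m ∧ I.wPref w m o₂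

def IndivRational (I : SMInstance M W) (μ : Matching M W) : Prop :=
  ∀ m w, μ.μm m = some w → w ∈ I.mpref m ∧ m ∈ I.wpref w

def BlockingPair (I : SMInstance M W) (μ : Matching M W) (m : M) (w : W) : Prop :=
  μ.μm m ≠ some w ∧ I.mPref m w (μ.μm m) ∧ I.wPref w m (μ.μw w)

def IsStable (I : SMInstance M W) (μ : Matching M W) : Prop :=
  IndivRational I μ ∧ ∀ m w, ¬ BlockingPair I μ m w

/-- The men-optimal stable matching (= output of men-proposing Gale–Shapley). -/
def IsMenOptimal (I : SMInstance M W) (μ : Matching M W) : Prop :=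
  IsStable I μ ∧ ∀ μ', IsStable I μ' → ∀ m, I.mWeak m (μ.μm m) (μ'.μm m)

/-- The women-optimal stable matching. -/
def IsWomenOptimal (I : SMInstance M W) (μ : Matching M W) : Prop :=
  IsStable I μ ∧ ∀ μ', IsStable I μ' → ∀ w, I.wWeak w (μ.μw w) (μ'.μw w)

/-- `I'` arises from `I` by arbitrary misreports of the women in `L`
(all men and all women outside `L` are truthful). -/
def GeneralManip (I I' : SMInstance M W) (L : Set W) : Prop :=
  I'.mpref = I.mpref ∧ ∀ w ∉ L, I'.wpref w = I.wpref w

/-- `I'` arises from `I` by truncation (prefix) misreports of the women in `L`. -/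
def TruncManip (I I' : SMInstance M W) (L : Set W) : Prop :=
  GeneralManip I I' L ∧ ∀ w ∈ L, (I'.wpref w) <+: (I.wpref w)

/-- `I'` arises from `I` by permutation misreports of the women in `L`. -/
def PermManip (I I' : SMInstance M W) (L : Set W) : Prop :=
  GeneralManip I I' L ∧ ∀ w ∈ L, (I'.wpref w).Perm (I.wpref w)

/-- Woman `w` is strictly better off in `μ₁` than in `μ₂` (true preferences). -/
def wStrictBetter (I : SMInstance M W) (w : W) (μ₁ μ₂ : Matching M W) : Prop :=
  ∃ m, μ₁.μw w = some m ∧ I.wPref w m (μ₂.μw w)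

/-- The set `δ(w)` of suitors of `w` at matching `μ`: the men who prefer `w`
to their own partner in `μ`. -/
def suitorSet (I : SMInstance M W) (μ : Matching M W) (w : W) : Set M :=
  {m | I.mPref m w (μ.μm m)}

/-- The suitor graph of Kobayashi–Matsui, on vertices `M ⊕ W ⊕ {s}`. -/
inductive SuitorEdge (I : SMInstance M W) (L : Set W) (μ : Matching M W) :
    M ⊕ W ⊕ Unit → M ⊕ W ⊕ Unit → Prop
  | partner_wm (w : W) (m : M) : μ.μw w = some m →
      SuitorEdge I L μ (Sum.inr (Sum.inl w)) (Sum.inl m)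
  | partner_mw (w : W) (m : M) : μ.μw w = some m →
      SuitorEdge I L μ (Sum.inl m) (Sum.inr (Sum.inl w))
  | suitor_manip (w : W) (m : M) : w ∈ L → m ∈ suitorSet I μ w →
      SuitorEdge I L μ (Sum.inl m) (Sum.inr (Sum.inl w))
  | suitor_honest (w : W) (m : M) : w ∉ L → m ∈ suitorSet I μ w →
      (∀ m' ∈ suitorSet I μ w, m' ≠ m → (I.wpref w).idxOf m < (I.wpref w).idxOf m') →
      SuitorEdge I L μ (Sum.inl m) (Sum.inr (Sum.inl w))
  | fromSource (w : W) : suitorSet I μ w = ∅ →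
      SuitorEdge I L μ (Sum.inr (Sum.inr ())) (Sum.inr (Sum.inl w))

/-- Reachability in the suitor graph. -/
abbrev SReach (I : SMInstance M W) (L : Set W) (μ : Matching M W) :
    (M ⊕ W ⊕ Unit) → (M ⊕ W ⊕ Unit) → Prop :=
  Relation.ReflTransGen (SuitorEdge I L μ)

/-- A reduced table (shortlists) for instance `I`: sublists of the true lists,
with mutual membership, where each man is engaged to the head of his reduced list,
each woman to the last man of hers, and every removed man is worse for the woman
than her current partner. -/
structure ReducedTable (I : SMInstance M W) where
  rm : M → List W
  rw : W → List M
  rmSub : ∀ m, (rm m).Sublist (I.mpref m)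
  rwSub : ∀ w, (rw w).Sublist (I.wpref w)
  mem_iff : ∀ m w, w ∈ rm m ↔ m ∈ rw w
  engaged : ∀ m w, (rm m).head? = some w ↔ (rw w).getLast? = some m
  removed_worse : ∀ m w p, m ∈ I.wpref w → m ∉ rw w → (rw w).getLast? = some p →
      (I.wpref w).idxOf p < (I.wpref w).idxOf m

/-- A rotation: a cyclic sequence of (distinct) men `m₀,…,m_{r-1}`
together with their current partners `w₀,…,w_{r-1}`. -/
structure Rot (M W : Type*) where
  r : ℕ
  hr : 2 ≤ r
  ms : Fin r → M
  ws : Fin r → W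
  inj : Function.Injective ms

/-- Cyclic successor of an index of a rotation. -/
def Rot.nxt (R : Rot M W) (i : Fin R.r) : Fin R.r :=
  ⟨((i : ℕ) + 1) % R.r, Nat.mod_lt _ (by have := R.hr; omega)⟩

/-- The reduced list of woman `w` determined by the stable matching `μ`:
the men weakly preferred to her current partner. -/
def reducedListW (I : SMInstance M W) (μ : Matching M W) (w : W) : List M :=
  match μ.μw w with
  | some p => (I.wpref w).filter (fun m => decide ((I.wpref w).idxOf m ≤ (I.wpref w).idxOf p))
  | none => []

/-- The reduced list of man `m` determined by the stable matching `μ`. -/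
def reducedListM (I : SMInstance M W) (μ : Matching M W) (m : M) : List W :=
  (I.mpref m).filter (fun w => decide (m ∈ reducedListW I μ w))

/-- The rotation `R` is exposed in (the reduced table of) the matching `μ`:
`w_i` is first and `w_{i+1}` second on `m_i`'s reduced list. -/
def Exposed (I : SMInstance M W) (μ : Matching M W) (R : Rot M W) : Prop :=
  ∀ i, (reducedListM I μ (R.ms i)).head? = some (R.ws i) ∧
       (reducedListM I μ (R.ms i))[1]? = some (R.ws (R.nxt i))

/-- `μ'` is the matching obtained from `μ` by eliminating the rotation `R`:
each `m_i` is now matched with `w_{i+1}`, everyone else is unchanged. -/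
def ElimStep (R : Rot M W) (μ μ' : Matching M W) : Prop :=
  (∀ i, μ'.μm (R.ms i) = some (R.ws (R.nxt i))) ∧
  ∀ m, (∀ i, m ≠ R.ms i) → μ'.μm m = μ.μm m

/-- `ElimSeq I μ S μ'`: the matching `μ'` is obtained from `μ` by successively
eliminating the (exposed-at-the-time) rotations of the set `S`. -/
inductive ElimSeq (I : SMInstance M W) : Matching M W → Set (Rot M W) → Matching M W → Prop
  | refl (μ : Matching M W) : ElimSeq I μ ∅ μ
  | step {μ μ' μ'' : Matching M W} {R : Rot M W} {S : Set (Rot M W)} :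
      Exposed I μ R → ElimStep R μ μ' → ElimSeq I μ' S μ'' → ElimSeq I μ (insert R S) μ''

/-- The rotation `R` moves man `m` from woman `w` to woman `w'`. -/
def Moves (R : Rot M W) (m : M) (w w' : W) : Prop :=
  ∃ i, R.ms i = m ∧ R.ws i = w ∧ R.ws (R.nxt i) = w'

/-- `R₁` explicitly precedes `R₂`: they share a man `m` such that `R₁` moves `m`
to some woman `w` and `R₂` moves `m` away from `w`. -/
def ExplicitPrec (R₁ R₂ : Rot M W) : Prop :=
  ∃ m w w₁ w₂, Moves R₁ m w₁ w ∧ Moves R₂ m w w₂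

/-- The precedence relation `≺`: transitive closure of explicit precedence. -/
def Prec (R₁ R₂ : Rot M W) : Prop :=
  Relation.TransGen ExplicitPrec R₁ R₂

/-- `R` is a rotation of the instance `I`: it is exposed at some matching
obtained from the men-optimal matching by eliminating rotations. -/
def IsRotOf (I : SMInstance M W) (R : Rot M W) : Prop :=
  ∃ μ0 S μ', IsMenOptimal I μ0 ∧ ElimSeq I μ0 S μ' ∧ Exposed I μ' R

/-- A closed (downward-closed under `≺`) set of rotations of the instance `I`. -/
def IsClosedSet (I : SMInstance M W) (𝓡 : Set (Rot M W)) : Prop :=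
  (∀ R ∈ 𝓡, IsRotOf I R) ∧ ∀ R ∈ 𝓡, ∀ R', IsRotOf I R' → Prec R' R → R' ∈ 𝓡

/-- The closed set `𝓡` can be eliminated: the matching obtained by eliminating it
is stable w.r.t. the true profile and is the men-optimal stable matching of some
profile in which only the women of `L` misreport. -/
def CanEliminate (I : SMInstance M W) (L : Set W) (𝓡 : Set (Rot M W)) : Prop :=
  ∃ μ0 μ', IsMenOptimal I μ0 ∧ ElimSeq I μ0 𝓡 μ' ∧ IsStable I μ' ∧
    ∃ I', GeneralManip I I' L ∧ IsMenOptimal I' μ'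

/-- `R` is a maximal rotation of the set `𝓡`. -/
def MaxRot (𝓡 : Set (Rot M W)) (R : Rot M W) : Prop :=
  R ∈ 𝓡 ∧ ∀ R' ∈ 𝓡, ¬ Prec R R'

/-- Whether man `m` proposes to woman `w` in the men-proposing Gale–Shapley run
whose outcome is `μ` (he proposes to every woman he weakly prefers to his final partner). -/
def proposedToB (I : SMInstance M W) (μ : Matching M W) (m : M) (w : W) : Bool :=
  decide (w ∈ I.mpref m) &&
    (match μ.μm m with
     | none => true
     | some w' => decide ((I.mpref m).idxOf w ≤ (I.mpref m).idxOf w'))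

/-- The proposal list `Pro(w)`: all men who proposed to `w`, ordered as in her stated list. -/
def proposals (I : SMInstance M W) (μ : Matching M W) (w : W) : List M :=
  (I.wpref w).filter (fun m => proposedToB I μ m w)

/-- `μ` is feasible for the permutation-manipulation game of coalition `L`. -/
def FeasibleM (I : SMInstance M W) (L : Set W) (μ : Matching M W) : Prop :=
  IsStable I μ ∧ ∃ I', PermManip I I' L ∧ IsMenOptimal I' μ

/-- `μ` is Pareto-optimal among feasible matchings (for the women). -/
def ParetoOptimal (I : SMInstance M W) (L : Set W) (μ : Matching M W) : Prop :=
  FeasibleM I L μ ∧ ¬∃ μ', FeasibleM I L μ' ∧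
    (∀ w, I.wWeak w (μ'.μw w) (μ.μw w)) ∧ (∃ w, wStrictBetter I w μ' μ)

/-- The reported profile `I'` with induced matching `μ` is a super-strong Nash
equilibrium of the permutation-manipulation game under the feasibility assumption. -/
def SuperStrongNE (I : SMInstance M W) (L : Set W) (I' : SMInstance M W)
    (μ : Matching M W) : Prop :=
  PermManip I I' L ∧ IsMenOptimal I' μ ∧ IsStable I μ ∧
  ∀ (Ls : Set W), Ls ⊆ L → ∀ I'' μ'',
    PermManip I I'' L → (∀ w ∉ Ls, I''.wpref w = I'.wpref w) →
    IsMenOptimal I'' μ'' → IsStable I μ'' →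
    ¬((∀ l ∈ Ls, I.wWeak l (μ''.μw l) (μ.μw l)) ∧ ∃ l ∈ Ls, wStrictBetter I l μ'' μ)

end Defs

/-!
Rank each agent's options by position in his or her list, "unmatched" last. Stability of `μ'`
gives opposed interests: if `m` strictly prefers his `μ`-partner `w` to `μ'(m)`, then `w`
strictly prefers `μ'(w)` to `m`. Conversely, `μ` maps the men who strictly prefer `μ`
injectively to women who strictly prefer `μ'`, and `μ'` maps those back injectively; by
finiteness these are bijections, so a man who strictly prefers `μ` is `μ'`-matched to a woman
who strictly prefers `μ'`.
Hence for `μ(m) = w`, `m` weakly prefers `μ'` iff `w` weakly prefers `μ`, which is exactly what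
makes "worse partner for each man" and "better partner for each woman" the two sides of one
matching; a pair blocking it would block `μ` or `μ'`.
-/

section PrefRank

variable {α : Type*} [DecidableEq α]

/-- Unlisted entries get rank `l.length`, the same as `none`. -/
def prefRank (l : List α) : Option α → ℕ
  | some a => l.idxOf a
  | none => l.length

theorem prefRank_le_length (l : List α) (o : Option α) : prefRank l o ≤ l.length := by
  cases o with
  | none => exact le_rfl
  | some a => exact List.idxOf_le_length

theorem ne_none_of_prefRank_lt {l : List α} {o o' : Option α}
    (h : prefRank l o < prefRank l o') : o ≠ none := by
  rintro rfl
  exact (prefRank_le_length l o').not_gt h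

theorem prefRank_injOn (l : List α) : Set.InjOn (prefRank l) {o | ∀ a ∈ o, a ∈ l} := by
  intro o ho o' ho' h
  cases o with
  | none =>
    cases o' with
    | none => rfl
    | some a' => exact absurd h (List.idxOf_lt_length_iff.2 (ho' a' rfl)).ne'
  | some a =>
    cases o' with
    | none => exact absurd h (List.idxOf_lt_length_iff.2 (ho a rfl)).ne
    | some a' => exact congrArg some ((List.idxOf_inj (ho a rfl)).1 h)

end PrefRank

section PickMax

variable {α β : Type*} [LinearOrder β]

def pickMax (f : α → β) (a b : α) : α := if f a ≤ f b then b else a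

theorem pickMax_eq_or (f : α → β) (a b : α) : pickMax f a b = a ∨ pickMax f a b = b := by
  unfold pickMax
  split_ifs <;> simp

theorem le_pickMax_left (f : α → β) (a b : α) : f a ≤ f (pickMax f a b) := by
  unfold pickMax
  split_ifs with h
  exacts [h, le_rfl]

theorem le_pickMax_right (f : α → β) (a b : α) : f b ≤ f (pickMax f a b) := by
  unfold pickMax
  split_ifs with h
  exacts [le_rfl, (not_le.1 h).le]

theorem pickMax_eq_iff {f : α → β} {a b c : α} (hab : f a = f b → a = b) :
    pickMax f a b = c ↔ a = c ∧ f b ≤ f a ∨ b = c ∧ f a ≤ f b := by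
  unfold pickMax
  split_ifs with h
  · rcases h.lt_or_eq with hlt | heq
    · simp [hlt.le, hlt.not_ge]
    · rw [hab heq]
      simp
  · simp [(not_le.1 h).le, h]

end PickMax

section Preferences

variable {M W : Type*}

def SMInstance.mRank [DecidableEq W] (I : SMInstance M W) (m : M) : Option W → ℕ :=
  prefRank (I.mpref m)

def SMInstance.wRank [DecidableEq M] (I : SMInstance M W) (w : W) : Option M → ℕ :=
  prefRank (I.wpref w)

theorem SMInstance.mPref_iff [DecidableEq W] (I : SMInstance M W) {m : M} {w : W}
    {o : Option W} : I.mPref m w o ↔ I.mRank m (some w) < I.mRank m o := by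
  cases o with
  | none => exact List.idxOf_lt_length_iff.symm
  | some w' =>
    simp only [SMInstance.mPref, SMInstance.mRank, prefRank]
    by_cases hw' : w' ∈ I.mpref m
    · simp only [hw', not_true_eq_false, false_or, and_iff_right_iff_imp]
      exact fun h => List.idxOf_lt_length_iff.1 (h.trans_le List.idxOf_le_length)
    · simp only [hw', not_false_eq_true, true_or, and_true, List.idxOf_of_notMem hw',
        List.idxOf_lt_length_iff]

def SMInstance.swap (I : SMInstance M W) : SMInstance W M :=
  ⟨I.wpref, I.mpref, I.wnodup, I.mnodup⟩

def Matching.swap (μ : Matching M W) : Matching W M :=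
  ⟨μ.μw, μ.μm, fun w m => (μ.consistent m w).symm⟩

theorem SMInstance.wPref_iff [DecidableEq M] (I : SMInstance M W) {w : W} {m : M}
    {o : Option M} : I.wPref w m o ↔ I.wRank w (some m) < I.wRank w o :=
  I.swap.mPref_iff

theorem SMInstance.mWeak_of_mRank_le [DecidableEq W] (I : SMInstance M W) {m : M}
    {o o' : Option W} (ho : ∀ w ∈ o, w ∈ I.mpref m) (ho' : ∀ w ∈ o', w ∈ I.mpref m)
    (h : I.mRank m o ≤ I.mRank m o') : I.mWeak m o o' := by
  rcases h.lt_or_eq with hlt | heq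
  · obtain ⟨w, rfl⟩ := Option.ne_none_iff_exists'.1 (ne_none_of_prefRank_lt hlt)
    exact Or.inr ⟨w, rfl, I.mPref_iff.2 hlt⟩
  · exact Or.inl (prefRank_injOn _ ho ho' heq)

theorem Matching.eq_of_μm_eq_some (μ : Matching M W) {m m' : M} {w : W}
    (hm : μ.μm m = some w) (hm' : μ.μm m' = some w) : m = m' :=
  Option.some.inj (((μ.consistent m w).1 hm).symm.trans ((μ.consistent m' w).1 hm'))

theorem Matching.eq_of_μw_eq_some (μ : Matching M W) {w w' : W} {m : M}
    (hw : μ.μw w = some m) (hw' : μ.μw w' = some m) : w = w' :=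
  μ.swap.eq_of_μm_eq_some hw hw'

variable {I : SMInstance M W} {μ : Matching M W}

theorem IndivRational.mem_mpref (h : IndivRational I μ) (m : M) :
    ∀ w ∈ μ.μm m, w ∈ I.mpref m :=
  fun w hw => (h m w hw).1

theorem IndivRational.mem_wpref (h : IndivRational I μ) (w : W) :
    ∀ m ∈ μ.μw w, m ∈ I.wpref w :=
  fun m hm => (h m w ((μ.consistent m w).2 hm)).2

theorem IndivRational.swap (h : IndivRational I μ) : IndivRational I.swap μ.swap :=
  fun w m hw => (h m w ((μ.consistent m w).2 hw)).symm

end Preferences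

section Stability

variable {M W : Type*} [DecidableEq M] [DecidableEq W] {I : SMInstance M W}
  {μ μ' : Matching M W}

theorem IsStable.swap (h : IsStable I μ) : IsStable I.swap μ.swap :=
  ⟨h.1.swap, fun w m ⟨hne, hw, hm⟩ =>
    h.2 m w ⟨fun e => hne ((μ.consistent m w).1 e), hm, hw⟩⟩

theorem wRank_lt_of_mRank_lt (hμ : IndivRational I μ) (h' : IsStable I μ') {m : M} {w : W}
    (hw : μ.μm m = some w) (hlt : I.mRank m (μ.μm m) < I.mRank m (μ'.μm m)) :
    I.wRank w (μ'.μw w) < I.wRank w (μ.μw w) := by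
  have hne : μ'.μm m ≠ some w := by
    rintro e
    rw [e, hw] at hlt
    exact hlt.false
  have hnot : ¬ I.wPref w m (μ'.μw w) :=
    fun hwp => h'.2 m w ⟨hne, I.mPref_iff.2 (hw ▸ hlt), hwp⟩
  rw [I.wPref_iff, not_lt] at hnot
  rw [(μ.consistent m w).1 hw]
  refine hnot.lt_of_ne fun e => hne ((μ'.consistent m w).2 ?_)
  exact prefRank_injOn _ (h'.1.mem_wpref w) (by simpa using (hμ m w hw).2) e

theorem mRank_lt_of_wRank_lt (hμ : IndivRational I μ) (h' : IsStable I μ') {w : W} {m : M}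
    (hm : μ.μw w = some m) (hlt : I.wRank w (μ.μw w) < I.wRank w (μ'.μw w)) :
    I.mRank m (μ'.μm m) < I.mRank m (μ.μm m) :=
  wRank_lt_of_mRank_lt (I := I.swap) (μ := μ.swap) hμ.swap h'.swap hm hlt

theorem exists_partner_of_mRank_lt [Finite M] (h : IsStable I μ) (h' : IsStable I μ') {m : M}
    (hlt : I.mRank m (μ.μm m) < I.mRank m (μ'.μm m)) :
    ∃ w, μ'.μm m = some w ∧ I.wRank w (μ'.μw w) < I.wRank w (μ.μw w) := by
  let A := {m : M // I.mRank m (μ.μm m) < I.mRank m (μ'.μm m)}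
  let B := {w : W // I.wRank w (μ'.μw w) < I.wRank w (μ.μw w)}
  have toB : ∀ a : A, ∃ b : B, μ.μm a = some b := by
    rintro ⟨m, hm⟩
    obtain ⟨w, hw⟩ := Option.ne_none_iff_exists'.1 (ne_none_of_prefRank_lt hm)
    exact ⟨⟨w, wRank_lt_of_mRank_lt h.1 h' hw hm⟩, hw⟩
  have toA : ∀ b : B, ∃ a : A, μ'.μw b = some a := by
    rintro ⟨w, hw⟩
    obtain ⟨m, hm⟩ := Option.ne_none_iff_exists'.1 (ne_none_of_prefRank_lt hw)
    exact ⟨⟨m, mRank_lt_of_wRank_lt h'.1 h hm hw⟩, hm⟩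
  choose f hf using toB
  choose g hg using toA
  have hinj : (g ∘ f).Injective := by
    intro a a' e
    have e' : g (f a) = g (f a') := e
    have hfa : f a = f a' := Subtype.ext (μ'.eq_of_μw_eq_some (hg (f a)) (e' ▸ hg (f a')))
    exact Subtype.ext (μ.eq_of_μm_eq_some (hf a) (hfa ▸ hf a'))
  obtain ⟨a, ha⟩ := Finite.surjective_of_injective hinj ⟨m, hlt⟩
  have hga : (g (f a) : M) = m := congrArg Subtype.val ha
  exact ⟨f a, (μ'.consistent m _).2 (hga ▸ hg (f a)), (f a).2⟩

theorem mRank_le_iff_wRank_le [Finite M] (h : IsStable I μ) (h' : IsStable I μ') {m : M} {w : W}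
    (hw : μ.μm m = some w) :
    I.mRank m (μ'.μm m) ≤ I.mRank m (μ.μm m) ↔
      I.wRank w (μ.μw w) ≤ I.wRank w (μ'.μw w) := by
  constructor
  · intro hle
    rcases hle.lt_or_eq with hlt | heq
    · obtain ⟨w', hw', hlt'⟩ := exists_partner_of_mRank_lt h' h hlt
      obtain rfl : w = w' := Option.some.inj (hw.symm.trans hw')
      exact hlt'.le
    · have hw' : μ'.μm m = some w :=
        (prefRank_injOn _ (h'.1.mem_mpref m) (h.1.mem_mpref m) heq).trans hw
      rw [(μ.consistent m w).1 hw, (μ'.consistent m w).1 hw']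
  · intro hle
    by_contra hlt
    exact (wRank_lt_of_mRank_lt h.1 h' hw (not_le.1 hlt)).not_ge hle

theorem isStable_of_forall_eq_or_eq (h : IsStable I μ) (h' : IsStable I μ') (ν : Matching M W)
    (hm : ∀ m, ν.μm m = μ.μm m ∨ ν.μm m = μ'.μm m)
    (hw : ∀ w, I.wRank w (ν.μw w) ≤ I.wRank w (μ.μw w) ∧
      I.wRank w (ν.μw w) ≤ I.wRank w (μ'.μw w)) :
    IsStable I ν := by
  refine ⟨fun m w hνm => ?_, fun m w ⟨hne, hmp, hwp⟩ => ?_⟩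
  · rcases hm m with e | e
    · exact h.1 m w (e ▸ hνm)
    · exact h'.1 m w (e ▸ hνm)
  · rw [I.wPref_iff] at hwp
    rcases hm m with e | e
    · rw [e] at hne hmp
      exact h.2 m w ⟨hne, hmp, I.wPref_iff.2 (hwp.trans_le (hw w).1)⟩
    · rw [e] at hne hmp
      exact h'.2 m w ⟨hne, hmp, I.wPref_iff.2 (hwp.trans_le (hw w).2)⟩

end Stability

section Meet

variable {M W : Type*} [DecidableEq M] [DecidableEq W] {I : SMInstance M W}
  {μ μ' : Matching M W}

def meetMan (I : SMInstance M W) (μ μ' : Matching M W) (m : M) : Option W :=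
  pickMax (I.mRank m) (μ.μm m) (μ'.μm m)

def meetWoman (I : SMInstance M W) (μ μ' : Matching M W) (w : W) : Option M :=
  pickMax (fun o => OrderDual.toDual (I.wRank w o)) (μ.μw w) (μ'.μw w)

theorem meetMan_eq_some_iff [Finite M] (h : IsStable I μ) (h' : IsStable I μ') (m : M) (w : W) :
    meetMan I μ μ' m = some w ↔ meetWoman I μ μ' w = some m := by
  rw [meetMan, meetWoman,
    pickMax_eq_iff (f := I.mRank m) (prefRank_injOn _ (h.1.mem_mpref m) (h'.1.mem_mpref m)),
    pickMax_eq_iff (f := fun o => OrderDual.toDual (I.wRank w o))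
      (prefRank_injOn _ (h.1.mem_wpref w) (h'.1.mem_wpref w)),
    ← μ.consistent, ← μ'.consistent]
  exact or_congr (and_congr_right (mRank_le_iff_wRank_le h h'))
    (and_congr_right (mRank_le_iff_wRank_le h' h))

def IsStable.meet [Finite M] (h : IsStable I μ) (h' : IsStable I μ') : Matching M W :=
  ⟨meetMan I μ μ', meetWoman I μ μ', meetMan_eq_some_iff h h'⟩

theorem IsStable.isStable_meet [Finite M] (h : IsStable I μ) (h' : IsStable I μ') :
    IsStable I (h.meet h') :=
  isStable_of_forall_eq_or_eq h h' _ (fun _ => pickMax_eq_or _ _ _) fun w =>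
    ⟨le_pickMax_left (fun o => OrderDual.toDual (I.wRank w o)) _ _,
      le_pickMax_right (fun o => OrderDual.toDual (I.wRank w o)) _ _⟩

end Meet

theorem conway_meet_general {M W : Type*} [DecidableEq M] [DecidableEq W]
    [Fintype M] (I : SMInstance M W) (μ μ' : Matching M W)
    (h : IsStable I μ) (h' : IsStable I μ') :
    ∃ ν : Matching M W, IsStable I ν ∧
      ∀ m, (ν.μm m = μ.μm m ∨ ν.μm m = μ'.μm m) ∧
        I.mWeak m (μ.μm m) (ν.μm m) ∧ I.mWeak m (μ'.μm m) (ν.μm m) := by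
  have hν := h.isStable_meet h'
  refine ⟨h.meet h', hν, fun m => ⟨pickMax_eq_or _ _ _, ?_, ?_⟩⟩
  · exact I.mWeak_of_mRank_le (h.1.mem_mpref m) (hν.1.mem_mpref m) (le_pickMax_left _ _ _)
  · exact I.mWeak_of_mRank_le (h'.1.mem_mpref m) (hν.1.mem_mpref m) (le_pickMax_right _ _ _)

/-- Conway's Lattice Theorem, meet part: the pointwise men-minimum
of two stable matchings is a well-defined matching and is stable. -/
theorem conway_meet {M W : Type*} [DecidableEq M] [DecidableEq W]
    [Fintype M] [Fintype W] (I : SMInstance M W) (μ μ' : Matching M W)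
    (h : IsStable I μ) (h' : IsStable I μ') :
    ∃ ν : Matching M W, IsStable I ν ∧
      ∀ m, (ν.μm m = μ.μm m ∨ ν.μm m = μ'.μm m) ∧
        I.mWeak m (μ.μm m) (ν.μm m) ∧ I.mWeak m (μ'.μm m) (ν.μm m) :=
  conway_meet_general I μ μ' h h'
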